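/- Let M be a class of monomorphisms in a cotensored V-category B such that: (i) arbitrary class-indexed intersections of M-morphisms exist in B and lie in M; (ii) pullbacks of M-morphisms along arbitrary morphisms exist in B and lie in M; (iii) M is closed under composition; and (iv) M is closed under cotensors. Then (M^{↑V}, M) = (M^↑, M) is a V-factorization system on B. -/

import Mathlib

open CategoryTheory CategoryTheory.Limits CategoryTheory.MonoidalCategory

universe w v₁ v₂ v₃ v₄ u₁ u₂ u₃ u₄

namespace EnrichedFS

variable (V : Type u₁) [Category.{v₁} V] [MonoidalCategory V] [SymmetricCategory V]
  [MonoidalClosed V]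
variable (B : Type u₂) [Category.{v₂} B] [EnrichedOrdinaryCategory V B]

/-- `e` is `V`-orthogonal to `m`: the square of hom-objects
with top `B(A₂,m)`, left `B(e,X₁)`, right `B(e,X₂)`, bottom `B(A₁,m)`
is a pullback in `V`. -/
def VOrth {A₁ A₂ X₁ X₂ : B} (e : A₁ ⟶ A₂) (m : X₁ ⟶ X₂) : Prop :=
  IsPullback (eHomWhiskerLeft V A₂ m) (eHomWhiskerRight V e X₁)
    (eHomWhiskerRight V e X₂) (eHomWhiskerLeft V A₁ m)

/-- `H^{↓V}`: the class of morphisms to which every member of `H` is `V`-orthogonal. -/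
def vRlp (H : MorphismProperty B) : MorphismProperty B :=
  fun _ _ m => ∀ ⦃A₁ A₂ : B⦄ (e : A₁ ⟶ A₂), H e → VOrth V B e m

/-- `M^{↑V}`: the class of morphisms which are `V`-orthogonal to every member of `M`. -/
def vLlp (M : MorphismProperty B) : MorphismProperty B :=
  fun _ _ e => ∀ ⦃X₁ X₂ : B⦄ (m : X₁ ⟶ X₂), M m → VOrth V B e m

/-- ordinary orthogonality: unique diagonal fillers for every commutative square. -/
def OrdOrth {A₁ A₂ X₁ X₂ : B} (e : A₁ ⟶ A₂) (m : X₁ ⟶ X₂) : Prop :=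
  ∀ (u : A₁ ⟶ X₁) (v : A₂ ⟶ X₂), u ≫ m = e ≫ v →
    ∃! d : A₂ ⟶ X₁, e ≫ d = u ∧ d ≫ m = v

/-- `H^{↓}` (ordinary). -/
def ordRlp (H : MorphismProperty B) : MorphismProperty B :=
  fun _ _ m => ∀ ⦃A₁ A₂ : B⦄ (e : A₁ ⟶ A₂), H e → OrdOrth B e m

/-- `M^{↑}` (ordinary). -/
def ordLlp (M : MorphismProperty B) : MorphismProperty B :=
  fun _ _ e => ∀ ⦃X₁ X₂ : B⦄ (m : X₁ ⟶ X₂), M m → OrdOrth B e m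

/-- `(E,M)` is a `V`-prefactorization system: `E^{↓V} = M` and `M^{↑V} = E`. -/
def IsVPrefactorization (E M : MorphismProperty B) : Prop :=
  vRlp V B E = M ∧ vLlp V B M = E

/-- `(E,M)` is an ordinary prefactorization system. -/
def IsOrdPrefactorization (E M : MorphismProperty B) : Prop :=
  ordRlp B E = M ∧ ordLlp B M = E

/-- every morphism factors as a morphism in `E` followed by a morphism in `M`. -/
def FactorizationsExist (E M : MorphismProperty B) : Prop :=
  ∀ ⦃X Y : B⦄ (f : X ⟶ Y), ∃ (Z : B) (e : X ⟶ Z) (m : Z ⟶ Y), E e ∧ M m ∧ e ≫ m = f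

/-- `(E,M)` is a `V`-factorization system. -/
def IsVFactorizationSystem (E M : MorphismProperty B) : Prop :=
  IsVPrefactorization V B E M ∧ FactorizationsExist B E M

/-- `(E,M)` is an ordinary factorization system. -/
def IsOrdFactorizationSystem (E M : MorphismProperty B) : Prop :=
  IsOrdPrefactorization B E M ∧ FactorizationsExist B E M

/-- intersection of two classes of morphisms. -/
def interProp (M N : MorphismProperty B) : MorphismProperty B := fun _ _ f => M f ∧ N f

/-- `V`-monomorphisms. -/
def vMono : MorphismProperty B := fun _ _ m => ∀ A : B, Mono (eHomWhiskerLeft V A m)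

/-- `V`-epimorphisms. -/
def vEpi : MorphismProperty B := fun _ _ e => ∀ A : B, Mono (eHomWhiskerRight V e A)

/-- `V`-strong monomorphisms. -/
def vStrongMono : MorphismProperty B := fun _ _ m =>
  vMono V B m ∧ ∀ ⦃A₁ A₂ : B⦄ (e : A₁ ⟶ A₂), vEpi V B e → VOrth V B e m

/-- `V`-strong epimorphisms. -/
def vStrongEpi : MorphismProperty B := fun _ _ e =>
  vEpi V B e ∧ ∀ ⦃X₁ X₂ : B⦄ (m : X₁ ⟶ X₂), vMono V B m → VOrth V B e m

/-- ordinary monomorphisms, as a class. -/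
def ordMono : MorphismProperty B := fun _ _ m => Mono m

/-- ordinary epimorphisms, as a class. -/
def ordEpi : MorphismProperty B := fun _ _ e => Epi e

/-- ordinary strong monomorphisms. -/
def ordStrongMono : MorphismProperty B := fun _ _ m =>
  Mono m ∧ ∀ ⦃A₁ A₂ : B⦄ (e : A₁ ⟶ A₂), Epi e → OrdOrth B e m

/-- ordinary strong epimorphisms. -/
def ordStrongEpi : MorphismProperty B := fun _ _ e =>
  Epi e ∧ ∀ ⦃X₁ X₂ : B⦄ (m : X₁ ⟶ X₂), Mono m → OrdOrth B e m

/-- closure under composition with isomorphisms on either side. -/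
def ClosedUnderIsoComp (E : MorphismProperty B) : Prop :=
  (∀ ⦃X Y Z : B⦄ (e : X ⟶ Y) (i : Y ⟶ Z), E e → IsIso i → E (e ≫ i)) ∧
  (∀ ⦃X Y Z : B⦄ (i : X ⟶ Y) (e : Y ⟶ Z), IsIso i → E e → E (i ≫ e))

/-- a commutative square which is a `V`-pullback: it is sent to a pullback square
in `V` by every hom functor `B(A,-)`. -/
def IsVPullbackSq {P X Y Z : B} (p₁ : P ⟶ X) (p₂ : P ⟶ Y) (f : X ⟶ Z) (g : Y ⟶ Z) : Prop :=
  p₁ ≫ f = p₂ ≫ g ∧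
    ∀ A : B, IsPullback (eHomWhiskerLeft V A p₁) (eHomWhiskerLeft V A p₂)
      (eHomWhiskerLeft V A f) (eHomWhiskerLeft V A g)

/-- a commutative square which is a `V`-pushout: it is sent to a pullback square
in `V` by every hom functor `B(-,A)`. -/
def IsVPushoutSq {X Y₁ Y₂ Q : B} (f₁ : X ⟶ Y₁) (f₂ : X ⟶ Y₂) (i₁ : Y₁ ⟶ Q) (i₂ : Y₂ ⟶ Q) :
    Prop :=
  f₁ ≫ i₁ = f₂ ≫ i₂ ∧
    ∀ A : B, IsPullback (eHomWhiskerRight V i₁ A) (eHomWhiskerRight V i₂ A)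
      (eHomWhiskerRight V f₁ A) (eHomWhiskerRight V f₂ A)

/-- `B` has `V`-kernel pairs. -/
def HasVKernelPairs : Prop :=
  ∀ ⦃X Y : B⦄ (f : X ⟶ Y), ∃ (P : B) (p₁ p₂ : P ⟶ X), IsVPullbackSq V B p₁ p₂ f f

/-- `B` has `V`-cokernel pairs. -/
def HasVCokernelPairs : Prop :=
  ∀ ⦃X Y : B⦄ (f : X ⟶ Y), ∃ (Q : B) (i₁ i₂ : Y ⟶ Q), IsVPushoutSq V B f f i₁ i₂

/-- `m : P ⟶ C` is a `V`-fibre-product (`V`-wide-pullback) of the family `f i : X i ⟶ C`,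
with projections `π i`. -/
def IsVFibreProduct {ι : Type w} {C : B} {X : ι → B} (f : ∀ i, X i ⟶ C)
    {P : B} (m : P ⟶ C) (π : ∀ i, P ⟶ X i) : Prop :=
  (∀ i, π i ≫ f i = m) ∧
    ∀ (A : B) (Z : V) (z : Z ⟶ (A ⟶[V] C)) (zi : ∀ i, Z ⟶ (A ⟶[V] X i)),
      (∀ i, zi i ≫ eHomWhiskerLeft V A (f i) = z) →
        ∃! t : Z ⟶ (A ⟶[V] P), t ≫ eHomWhiskerLeft V A m = z ∧
          ∀ i, t ≫ eHomWhiskerLeft V A (π i) = zi i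

/-- `m : P ⟶ C` is an ordinary fibre product (wide pullback) of the family `f i : X i ⟶ C`. -/
def OrdIsFibreProduct {ι : Type w} {C : B} {X : ι → B} (f : ∀ i, X i ⟶ C)
    {P : B} (m : P ⟶ C) (π : ∀ i, P ⟶ X i) : Prop :=
  (∀ i, π i ≫ f i = m) ∧
    ∀ ⦃W' : B⦄ (z : W' ⟶ C) (zi : ∀ i, W' ⟶ X i), (∀ i, zi i ≫ f i = z) →
      ∃! t : W' ⟶ P, t ≫ m = z ∧ ∀ i, t ≫ π i = zi i

/-- a cone is a `V`-limit cone: it is sent to a limit cone in `V` by every `B(A,-)`. -/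
def IsVLimitCone {J : Type u₃} [Category.{v₃} J] {D : J ⥤ B} (c : Cone D) : Prop :=
  ∀ (A : B) (Z : V) (z : ∀ j : J, Z ⟶ (A ⟶[V] D.obj j)),
    (∀ ⦃j j' : J⦄ (φ : j ⟶ j'), z j ≫ eHomWhiskerLeft V A (D.map φ) = z j') →
      ∃! t : Z ⟶ (A ⟶[V] c.pt), ∀ j, t ≫ eHomWhiskerLeft V A (c.π.app j) = z j

/-- a cocone is a `V`-colimit cocone: it is sent to a limit cone in `V` by every `B(-,A)`. -/
def IsVColimitCocone {J : Type u₃} [Category.{v₃} J] {D : J ⥤ B} (c : Cocone D) : Prop :=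
  ∀ (A : B) (Z : V) (z : ∀ j : J, Z ⟶ (D.obj j ⟶[V] A)),
    (∀ ⦃j j' : J⦄ (φ : j ⟶ j'), z j' ≫ eHomWhiskerRight V (D.map φ) A = z j) →
      ∃! t : Z ⟶ (c.pt ⟶[V] A), ∀ j, t ≫ eHomWhiskerRight V (c.ι.app j) A = z j

/-- `B` has small `V`-limits. -/
def HasSmallVLimits : Prop :=
  ∀ (J : Type v₂) [SmallCategory J] (D : J ⥤ B), ∃ c : Cone D, IsVLimitCone V B c

/-- `B` has small `V`-colimits. -/
def HasSmallVColimits : Prop :=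
  ∀ (J : Type v₂) [SmallCategory J] (D : J ⥤ B), ∃ c : Cocone D, IsVColimitCocone V B c

/-- `B` has finite `V`-limits. -/
def HasFiniteVLimits : Prop :=
  ∀ (J : Type) [SmallCategory J] [FinCategory J] (D : J ⥤ B),
    ∃ c : Cone D, IsVLimitCone V B c

/-- `B` is well-powered with respect to the class `M`: every object has,
up to isomorphism, only a set of `M`-subobjects. -/
def WellPoweredWrt (M : MorphismProperty B) : Prop :=
  ∀ X : B, ∃ (ι : Type v₂) (Y : ι → B) (f : ∀ i, Y i ⟶ X), (∀ i, M (f i)) ∧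
    ∀ ⦃Z : B⦄ (g : Z ⟶ X), M g → ∃ (i : ι) (h : Z ≅ Y i), h.hom ≫ f i = g

/-- `B` is co-well-powered with respect to the class `E`. -/
def CoWellPoweredWrt (E : MorphismProperty B) : Prop :=
  ∀ X : B, ∃ (ι : Type v₂) (Y : ι → B) (f : ∀ i, X ⟶ Y i), (∀ i, E (f i)) ∧
    ∀ ⦃Z : B⦄ (g : X ⟶ Z), E g → ∃ (i : ι) (h : Y i ≅ Z), f i ≫ h.hom = g

/-- comparison morphism `B(T, X) ⟶ [v, B(A, X)]` in `V` induced by a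
unit `η : v ⟶ B(A, T)`, where `T` is a candidate tensor `v ⊗ A`. -/
def tensorComparison {v : V} {A T : B} (η : v ⟶ (A ⟶[V] T)) (X : B) :
    (T ⟶[V] X) ⟶ (ihom v).obj (A ⟶[V] X) :=
  MonoidalClosed.curry (eComp V A T X) ≫ (MonoidalClosed.pre η).app (A ⟶[V] X)

/-- `η : v ⟶ B(A,T)` exhibits `T` as a tensor `v ⊗ A` in the enriched sense. -/
def IsTensorUnit (v : V) (A T : B) (η : v ⟶ (A ⟶[V] T)) : Prop :=
  ∀ X : B, IsIso (tensorComparison V B η X)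

/-- `B` is tensored over `V`. -/
def Tensored : Prop :=
  ∀ (v : V) (A : B), ∃ (T : B) (η : v ⟶ (A ⟶[V] T)), IsTensorUnit V B v A T η

/-- `E` is closed under tensors: whenever tensors exist, `v ⊗ e` lies in `E` for `e ∈ E`. -/
def ClosedUnderTensors (E : MorphismProperty B) : Prop :=
  ∀ (v : V) ⦃A₁ A₂ : B⦄ (e : A₁ ⟶ A₂) {T₁ T₂ : B}
    (η₁ : v ⟶ (A₁ ⟶[V] T₁)) (η₂ : v ⟶ (A₂ ⟶[V] T₂)),
    IsTensorUnit V B v A₁ T₁ η₁ → IsTensorUnit V B v A₂ T₂ η₂ → E e →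
      ∀ t : T₁ ⟶ T₂, η₁ ≫ eHomWhiskerLeft V A₁ t = η₂ ≫ eHomWhiskerRight V e T₂ → E t

/-- comparison morphism `B(A, C) ⟶ [v, B(A, X)]` in `V` induced by a
counit `ε : v ⟶ B(C, X)`, where `C` is a candidate cotensor `[v, X]`. -/
def cotensorComparison {v : V} {C X : B} (ε : v ⟶ (C ⟶[V] X)) (A : B) :
    (A ⟶[V] C) ⟶ (ihom v).obj (A ⟶[V] X) :=
  MonoidalClosed.curry ((β_ (C ⟶[V] X) (A ⟶[V] C)).hom ≫ eComp V A C X) ≫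
    (MonoidalClosed.pre ε).app (A ⟶[V] X)

/-- `ε : v ⟶ B(C,X)` exhibits `C` as a cotensor `[v, X]` in the enriched sense. -/
def IsCotensorCounit (v : V) (X C : B) (ε : v ⟶ (C ⟶[V] X)) : Prop :=
  ∀ A : B, IsIso (cotensorComparison V B ε A)

/-- `B` is cotensored over `V`. -/
def Cotensored : Prop :=
  ∀ (v : V) (X : B), ∃ (C : B) (ε : v ⟶ (C ⟶[V] X)), IsCotensorCounit V B v X C ε

/-- `M` is closed under cotensors: `[v, m]` lies in `M` for `m ∈ M`. -/
def ClosedUnderCotensors (M : MorphismProperty B) : Prop :=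
  ∀ (v : V) ⦃X₁ X₂ : B⦄ (m : X₁ ⟶ X₂) {C₁ C₂ : B}
    (ε₁ : v ⟶ (C₁ ⟶[V] X₁)) (ε₂ : v ⟶ (C₂ ⟶[V] X₂)),
    IsCotensorCounit V B v X₁ C₁ ε₁ → IsCotensorCounit V B v X₂ C₂ ε₂ → M m →
      ∀ t : C₁ ⟶ C₂, ε₁ ≫ eHomWhiskerLeft V C₁ m = ε₂ ≫ eHomWhiskerRight V t X₂ → M t

/-- a `V`-functor from a `V`-category `J` to an enriched ordinary category `D`. -/
structure VFunctor (J : Type u₃) [EnrichedCategory V J]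
    (D : Type u₄) [Category.{v₄} D] [EnrichedOrdinaryCategory V D] where
  obj : J → D
  emap : ∀ X Y : J, (X ⟶[V] Y) ⟶ (obj X ⟶[V] obj Y)
  emap_id : ∀ X : J, eId V X ≫ emap X X = eId V (obj X)
  emap_comp : ∀ X Y Z : J,
    eComp V X Y Z ≫ emap X Z = (emap X Y ⊗ₘ emap Y Z) ≫ eComp V (obj X) (obj Y) (obj Z)

/-- the underlying action of a `V`-functor on ordinary morphisms. -/
def VFunctor.map' {J : Type u₃} [Category.{v₃} J] [EnrichedOrdinaryCategory V J]
    {D : Type u₄} [Category.{v₄} D] [EnrichedOrdinaryCategory V D]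
    (F : VFunctor V J D) {X Y : J} (f : X ⟶ Y) : F.obj X ⟶ F.obj Y :=
  (eHomEquiv V).symm (eHomEquiv V f ≫ F.emap X Y)

/-- a `V`-adjunction `F ⊣ G`, given by a `V`-natural isomorphism
`D(F A, X) ≅ A(A, G X)` of hom-objects. -/
structure VAdjunction {A : Type u₃} [Category.{v₃} A] [EnrichedOrdinaryCategory V A]
    {D : Type u₄} [Category.{v₄} D] [EnrichedOrdinaryCategory V D]
    (F : VFunctor V A D) (G : VFunctor V D A) where
  iso : ∀ (X : A) (Y : D), (F.obj X ⟶[V] Y) ≅ (X ⟶[V] G.obj Y)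
  nat_right : ∀ (X : A) (Y Y' : D),
    eComp V (F.obj X) Y Y' ≫ (iso X Y').hom =
      ((iso X Y).hom ⊗ₘ G.emap Y Y') ≫ eComp V X (G.obj Y) (G.obj Y')
  nat_left : ∀ (X X' : A) (Y : D),
    (F.emap X X' ▷ (F.obj X' ⟶[V] Y)) ≫ eComp V (F.obj X) (F.obj X') Y ≫ (iso X Y).hom =
      ((X ⟶[V] X') ◁ (iso X' Y).hom) ≫ eComp V X X' (G.obj Y)

/-- a `V`-functor `J → V` (a weight), presented by its uncurried action. -/
structure VWeight (J : Type u₃) [EnrichedCategory V J] where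
  obj : J → V
  act : ∀ j j' : J, obj j ⊗ (j ⟶[V] j') ⟶ obj j'
  act_id : ∀ j : J, (obj j ◁ eId V j) ≫ act j j = (ρ_ (obj j)).hom
  act_comp : ∀ j j' j'' : J,
    (α_ (obj j) (j ⟶[V] j') (j' ⟶[V] j'')).inv ≫ (act j j' ▷ (j' ⟶[V] j'')) ≫ act j' j'' =
      (obj j ◁ eComp V j j' j'') ≫ act j j''

/-- a `V`-natural transformation between `V`-functors. -/
structure VNatTrans {J : Type u₃} [EnrichedCategory V J]
    {D : Type u₄} [Category.{v₄} D] [EnrichedOrdinaryCategory V D]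
    (F G : VFunctor V J D) where
  app : ∀ j : J, F.obj j ⟶ G.obj j
  naturality : ∀ j j' : J,
    F.emap j j' ≫ eHomWhiskerLeft V (F.obj j) (app j') =
      G.emap j j' ≫ eHomWhiskerRight V (app j) (G.obj j')

/-- `cone` exhibits `L` as the `V`-enriched weighted (indexed) limit `[W, F]`. -/
structure IsWeightedLimit {J : Type u₃} [EnrichedCategory V J]
    {D : Type u₄} [Category.{v₄} D] [EnrichedOrdinaryCategory V D]
    (W : VWeight V J) (F : VFunctor V J D) (L : D)
    (cone : ∀ j : J, W.obj j ⟶ (L ⟶[V] F.obj j)) : Prop where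
  natural : ∀ j j' : J,
    W.act j j' ≫ cone j' =
      (cone j ▷ (j ⟶[V] j')) ≫ ((L ⟶[V] F.obj j) ◁ F.emap j j') ≫
        eComp V L (F.obj j) (F.obj j')
  universal : ∀ (A : D) (Z : V) (μ : ∀ j : J, Z ⊗ W.obj j ⟶ (A ⟶[V] F.obj j)),
    (∀ j j' : J,
      (Z ◁ W.act j j') ≫ μ j' =
        (α_ Z (W.obj j) (j ⟶[V] j')).inv ≫ (μ j ▷ (j ⟶[V] j')) ≫
          ((A ⟶[V] F.obj j) ◁ F.emap j j') ≫ eComp V A (F.obj j) (F.obj j')) →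
      ∃! t : Z ⟶ (A ⟶[V] L), ∀ j : J,
        (t ▷ W.obj j) ≫ ((A ⟶[V] L) ◁ cone j) ≫ eComp V A L (F.obj j) = μ j

/-- `B` is `V`-finitely-well-complete: it has finite `V`-limits and `V`-intersections
of arbitrary class-indexed families of `V`-strong monomorphisms. -/
def VFinitelyWellComplete : Prop :=
  HasFiniteVLimits V B ∧
    ∀ {ι : Type (max u₂ v₂)} {C : B} (X : ι → B) (f : ∀ i, X i ⟶ C),
      (∀ i, vStrongMono V B (f i)) →
        ∃ (P : B) (m : P ⟶ C) (π : ∀ i, P ⟶ X i), IsVFibreProduct V B f m π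

/-- `B` is finitely well-complete (ordinary sense): it has finite limits and
intersections of arbitrary class-indexed families of strong monomorphisms. -/
def OrdFinitelyWellComplete : Prop :=
  HasFiniteLimits B ∧
    ∀ {ι : Type (max u₂ v₂)} {C : B} (X : ι → B) (f : ∀ i, X i ⟶ C),
      (∀ i, ordStrongMono B (f i)) →
        ∃ (P : B) (m : P ⟶ C) (π : ∀ i, P ⟶ X i), OrdIsFibreProduct B f m π

/-!
Transposing across cotensors turns a cone with vertex `W` over the square of hom-objects
defining `e ↓_V m` into a commutative square of `e` against `[W, m]`. Since `M` is closed
under cotensors, ordinary orthogonality to `M` therefore already gives `V`-orthogonality,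
so `M^{↑V} = M^↑`. A morphism `f` factors through the intersection `P` of all `M`-morphisms
through which it factors. Given a square from the first factor `e : X ⟶ P` to some `m ∈ M`,
the pullback of `m` along its bottom side is again an `M`-morphism through which `f` factors,
so the projection of the intersection splits it, and this yields the diagonal. Finally, if
`m = e ≫ p` with `e ∈ M^{↑V}` and `e ↓_V m`, then `e` is invertible; `M` is closed under
precomposition with isomorphisms because any object isomorphic to `X` is a cotensor `[I, X]`.
-/

lemma isPullback_of_existsUnique_lift {𝒞 : Type*} [Category 𝒞] {P X Y Z : 𝒞} {fst : P ⟶ X}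
    {snd : P ⟶ Y} {f : X ⟶ Z} {g : Y ⟶ Z} (w : fst ≫ f = snd ≫ g)
    (h : ∀ {W : 𝒞} (a : W ⟶ X) (b : W ⟶ Y), a ≫ f = b ≫ g →
      ∃! l : W ⟶ P, l ≫ fst = a ∧ l ≫ snd = b) :
    IsPullback fst snd f g := by
  choose lift hlift huniq using fun s : PullbackCone f g => h s.fst s.snd s.condition
  exact IsPullback.of_isLimit (PullbackCone.IsLimit.mk w lift (fun s => (hlift s).1)
    (fun s => (hlift s).2) (fun s l h₁ h₂ => huniq s l ⟨h₁, h₂⟩))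

lemma IsPullback.existsUnique_lift {𝒞 : Type*} [Category 𝒞] {P X Y Z : 𝒞} {fst : P ⟶ X}
    {snd : P ⟶ Y} {f : X ⟶ Z} {g : Y ⟶ Z} (h : IsPullback fst snd f g) {W : 𝒞}
    (a : W ⟶ X) (b : W ⟶ Y) (hab : a ≫ f = b ≫ g) :
    ∃! l : W ⟶ P, l ≫ fst = a ∧ l ≫ snd = b :=
  ⟨h.lift a b hab, ⟨h.lift_fst a b hab, h.lift_snd a b hab⟩,
    fun l hl => h.hom_ext (by rw [hl.1, h.lift_fst]) (by rw [hl.2, h.lift_snd])⟩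

section

variable {V B}

omit [SymmetricCategory V] [MonoidalClosed V] in
lemma eHomEquiv_comp_eq_whiskerLeft {X Y Z : B} (f : X ⟶ Y) (g : Y ⟶ Z) :
    eHomEquiv V (f ≫ g) = eHomEquiv V f ≫ eHomWhiskerLeft V X g := by
  rw [eHomEquiv_comp, eHomWhiskerLeft, MonoidalCategory.tensorHom_def,
    rightUnitor_inv_naturality_assoc, unitors_inv_equal]
  simp

omit [SymmetricCategory V] [MonoidalClosed V] in
lemma eHomEquiv_comp_eq_whiskerRight {X Y Z : B} (f : X ⟶ Y) (g : Y ⟶ Z) :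
    eHomEquiv V (f ≫ g) = eHomEquiv V g ≫ eHomWhiskerRight V f Z := by
  rw [eHomEquiv_comp, eHomWhiskerRight, tensorHom_def', leftUnitor_inv_naturality_assoc]
  simp

omit [SymmetricCategory V] [MonoidalClosed V] in
lemma whiskerLeft_eHomWhiskerRight_eComp (A : B) {C' C X : B} (t : C' ⟶ C) :
    ((A ⟶[V] C') ◁ eHomWhiskerRight V t X) ≫ eComp V A C' X =
      (eHomWhiskerLeft V A t ▷ (C ⟶[V] X)) ≫ eComp V A C X := by
  dsimp [eHomWhiskerLeft, eHomWhiskerRight]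
  rw [MonoidalCategory.whiskerLeft_comp_assoc, MonoidalCategory.whiskerLeft_comp_assoc,
    ← e_assoc, comp_whiskerRight_assoc, comp_whiskerRight_assoc,
    associator_inv_naturality_middle_assoc, triangle_assoc_comp_left_inv_assoc]

lemma uncurry_cotensorComparison {v : V} {C X : B} (ε : v ⟶ (C ⟶[V] X)) (A : B) :
    MonoidalClosed.uncurry (cotensorComparison V B ε A) =
      (ε ▷ (A ⟶[V] C)) ≫ (β_ (C ⟶[V] X) (A ⟶[V] C)).hom ≫ eComp V A C X := by
  dsimp [cotensorComparison]
  rw [MonoidalClosed.uncurry_natural_left, MonoidalClosed.uncurry_pre,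
    whisker_exchange_assoc, ← MonoidalClosed.uncurry_eq, MonoidalClosed.uncurry_curry]

lemma cotensorComparison_comp_eHomWhiskerRight {v : V} {C' C X : B} (ε : v ⟶ (C ⟶[V] X))
    (t : C' ⟶ C) (A : B) :
    cotensorComparison V B (ε ≫ eHomWhiskerRight V t X) A =
      eHomWhiskerLeft V A t ≫ cotensorComparison V B ε A := by
  apply MonoidalClosed.uncurry_injective
  rw [MonoidalClosed.uncurry_natural_left, uncurry_cotensorComparison,
    uncurry_cotensorComparison, comp_whiskerRight_assoc,
    BraidedCategory.braiding_naturality_left_assoc, whiskerLeft_eHomWhiskerRight_eComp,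
    whisker_exchange_assoc, BraidedCategory.braiding_naturality_right_assoc]

omit [SymmetricCategory V] in
lemma isIso_curry_leftUnitor_hom (Y : V) : IsIso (MonoidalClosed.curry (λ_ Y).hom) := by
  rw [show MonoidalClosed.curry (λ_ Y).hom = MonoidalClosed.unitNatIso.hom.app Y by
    simp [MonoidalClosed.unitNatIso, MonoidalClosed.curry_eq]]
  infer_instance

lemma isCotensorCounit_eId (X : B) : IsCotensorCounit V B (𝟙_ V) X X (eId V X) := by
  intro A
  have h : cotensorComparison V B (eId V X) A = MonoidalClosed.curry (λ_ _).hom := by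
    apply MonoidalClosed.uncurry_injective
    rw [uncurry_cotensorComparison, MonoidalClosed.uncurry_curry,
      BraidedCategory.braiding_naturality_left_assoc, ← braiding_rightUnitor, cancel_epi,
      ← cancel_epi (ρ_ _).inv, e_comp_id, Iso.inv_hom_id]
  rw [h]
  exact isIso_curry_leftUnitor_hom _

lemma IsCotensorCounit.comp_eHomWhiskerRight {v : V} {X C C' : B} {ε : v ⟶ (C ⟶[V] X)}
    (hε : IsCotensorCounit V B v X C ε) (t : C' ⟶ C) [IsIso t] :
    IsCotensorCounit V B v X C' (ε ≫ eHomWhiskerRight V t X) := by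
  intro A
  have : IsIso (eHomWhiskerLeft V A t) :=
    inferInstanceAs (IsIso (((eHomFunctor V B).obj (Opposite.op A)).map t))
  have := hε A
  rw [cotensorComparison_comp_eHomWhiskerRight]
  infer_instance

lemma isCotensorCounit_eHomEquiv_of_isIso {A X : B} (i : A ⟶ X) [IsIso i] :
    IsCotensorCounit V B (𝟙_ V) X A (eHomEquiv V i) := by
  have h := (isCotensorCounit_eId (V := V) X).comp_eHomWhiskerRight i
  rwa [← eHomEquiv_id, ← eHomEquiv_comp_eq_whiskerRight, Category.comp_id] at h

namespace IsCotensorCounit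

variable {v : V} {X C : B} {ε : v ⟶ (C ⟶[V] X)}

noncomputable def homEquiv (hε : IsCotensorCounit V B v X C ε) (A : B) :
    (A ⟶ C) ≃ (v ⟶ (A ⟶[V] X)) :=
  haveI := hε A
  (eHomEquiv V).trans ((asIso (cotensorComparison V B ε A)).homToEquiv.trans
    (((ihom.adjunction v).homEquiv _ _).symm.trans ((ρ_ v).homCongr (Iso.refl _))))

lemma homEquiv_apply (hε : IsCotensorCounit V B v X C ε) {A : B} (f : A ⟶ C) :
    hε.homEquiv A f = ε ≫ eHomWhiskerRight V f X := by
  rw [homEquiv, Equiv.trans_apply, Equiv.trans_apply, Equiv.trans_apply, Iso.homCongr_apply,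
    Iso.homToEquiv_apply, Iso.refl_hom, Category.comp_id, asIso_hom]
  change (ρ_ v).inv ≫ MonoidalClosed.uncurry _ = _
  rw [MonoidalClosed.uncurry_natural_left,
    uncurry_cotensorComparison, whisker_exchange_assoc, ← rightUnitor_inv_naturality_assoc,
    BraidedCategory.braiding_naturality_right_assoc, rightUnitor_inv_braiding_assoc,
    eHomWhiskerRight]

lemma homEquiv_comp (hε : IsCotensorCounit V B v X C ε) {A' A : B} (g : A' ⟶ A) (f : A ⟶ C) :
    hε.homEquiv A' (g ≫ f) = hε.homEquiv A f ≫ eHomWhiskerRight V g X := by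
  simp [homEquiv_apply]

end IsCotensorCounit

section Orthogonality

variable {A₁ A₂ X₁ X₂ : B}

omit [SymmetricCategory V] [MonoidalClosed V] in
lemma ordOrth_of_vOrth {e : A₁ ⟶ A₂} {m : X₁ ⟶ X₂} (h : VOrth V B e m) : OrdOrth B e m := by
  intro u v huv
  have hsq : eHomEquiv V v ≫ eHomWhiskerRight V e X₂ = eHomEquiv V u ≫ eHomWhiskerLeft V A₁ m := by
    rw [← eHomEquiv_comp_eq_whiskerRight, ← eHomEquiv_comp_eq_whiskerLeft, huv]
  refine ((eHomEquiv V).existsUnique_congr fun d => ?_).2 (IsPullback.existsUnique_lift h _ _ hsq)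
  rw [← eHomEquiv_comp_eq_whiskerLeft, ← eHomEquiv_comp_eq_whiskerRight,
    (eHomEquiv V).apply_eq_iff_eq, (eHomEquiv V).apply_eq_iff_eq, and_comm]

lemma existsUnique_lift_of_ordOrth_cotensor {W : V} {C₁ C₂ : B} {ε₁ : W ⟶ (C₁ ⟶[V] X₁)}
    {ε₂ : W ⟶ (C₂ ⟶[V] X₂)} (hε₁ : IsCotensorCounit V B W X₁ C₁ ε₁)
    (hε₂ : IsCotensorCounit V B W X₂ C₂ ε₂) {m : X₁ ⟶ X₂} {t : C₁ ⟶ C₂}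
    (ht : ε₁ ≫ eHomWhiskerLeft V C₁ m = ε₂ ≫ eHomWhiskerRight V t X₂) {e : A₁ ⟶ A₂}
    (horth : OrdOrth B e t) (a : W ⟶ (A₂ ⟶[V] X₂)) (b : W ⟶ (A₁ ⟶[V] X₁))
    (hab : a ≫ eHomWhiskerRight V e X₂ = b ≫ eHomWhiskerLeft V A₁ m) :
    ∃! l : W ⟶ (A₂ ⟶[V] X₁),
      l ≫ eHomWhiskerLeft V A₂ m = a ∧ l ≫ eHomWhiskerRight V e X₁ = b := by
  have key : ∀ {A : B} (d : A ⟶ C₁),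
      hε₁.homEquiv A d ≫ eHomWhiskerLeft V A m = hε₂.homEquiv A (d ≫ t) := by
    intro A d
    rw [hε₁.homEquiv_apply, hε₂.homEquiv_apply, eHomWhiskerRight_comp, Category.assoc,
      ← eHom_whisker_exchange, reassoc_of% ht]
  obtain ⟨v, rfl⟩ := (hε₂.homEquiv A₂).surjective a
  obtain ⟨u, rfl⟩ := (hε₁.homEquiv A₁).surjective b
  have hsq : u ≫ t = e ≫ v := (hε₂.homEquiv A₁).injective (by
    rw [← key, ← hab, hε₂.homEquiv_comp])
  refine ((hε₁.homEquiv A₂).existsUnique_congr fun d => ?_).1 (horth u v hsq)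
  rw [key, ← hε₁.homEquiv_comp, Equiv.apply_eq_iff_eq, Equiv.apply_eq_iff_eq, and_comm]

lemma vOrth_of_ordLlp (hc : Cotensored V B) {M : MorphismProperty B}
    (hcot : ClosedUnderCotensors V B M) {e : A₁ ⟶ A₂} (he : ordLlp B M e) {m : X₁ ⟶ X₂}
    (hm : M m) : VOrth V B e m := by
  refine isPullback_of_existsUnique_lift (eHom_whisker_exchange V e m) fun {W} a b hab => ?_
  obtain ⟨C₁, ε₁, hε₁⟩ := hc W X₁
  obtain ⟨C₂, ε₂, hε₂⟩ := hc W X₂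
  obtain ⟨t, ht⟩ := (hε₂.homEquiv C₁).surjective (ε₁ ≫ eHomWhiskerLeft V C₁ m)
  rw [hε₂.homEquiv_apply] at ht
  exact existsUnique_lift_of_ordOrth_cotensor hε₁ hε₂ ht.symm
    (he t (hcot W m ε₁ ε₂ hε₁ hε₂ hm t ht.symm)) a b hab

lemma vLlp_eq_ordLlp (hc : Cotensored V B) {M : MorphismProperty B}
    (hcot : ClosedUnderCotensors V B M) : vLlp V B M = ordLlp B M := by
  ext A₁ A₂ e
  exact ⟨fun he _ _ m hm => ordOrth_of_vOrth (he m hm),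
    fun he _ _ m hm => vOrth_of_ordLlp hc hcot he hm⟩

end Orthogonality

section Factorization

variable {M : MorphismProperty B}

lemma ordLlp_of_exists_section (hmono : ∀ ⦃X Y : B⦄ (f : X ⟶ Y), M f → Mono f)
    (hpb : ∀ ⦃X Z Q : B⦄ (m : X ⟶ Z) (g : Q ⟶ Z), M m →
      ∃ (P : B) (p : P ⟶ X) (f : P ⟶ Q), IsPullback p f m g ∧ M f)
    {X P : B} {e : X ⟶ P}
    (hsec : ∀ ⦃P' : B⦄ (n : P' ⟶ P) (k : X ⟶ P'), M n → k ≫ n = e →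
      ∃ s : P ⟶ P', s ≫ n = 𝟙 P ∧ e ≫ s = k) :
    ordLlp B M e := by
  intro X₁ X₂ m hm u v huv
  have := hmono m hm
  obtain ⟨P', p, n, hpn, hn⟩ := hpb m v hm
  obtain ⟨s, hsn, hes⟩ := hsec n (hpn.lift u e huv) hn (hpn.lift_snd u e huv)
  have hsm : (s ≫ p) ≫ m = v := by rw [Category.assoc, hpn.w, reassoc_of% hsn]
  refine ⟨s ≫ p, ⟨by rw [reassoc_of% hes, hpn.lift_fst], hsm⟩, fun d hd => ?_⟩
  rw [← cancel_mono m, hd.2, hsm]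

lemma factorizationsExist_ordLlp (hmono : ∀ ⦃X Y : B⦄ (f : X ⟶ Y), M f → Mono f)
    (hint : ∀ {ι : Type (max u₂ v₂)} {C : B} (X : ι → B) (f : ∀ i, X i ⟶ C),
      (∀ i, M (f i)) → ∃ (P : B) (m : P ⟶ C) (π : ∀ i, P ⟶ X i),
        OrdIsFibreProduct B f m π ∧ M m)
    (hpb : ∀ ⦃X Z Q : B⦄ (m : X ⟶ Z) (g : Q ⟶ Z), M m →
      ∃ (P : B) (p : P ⟶ X) (f : P ⟶ Q), IsPullback p f m g ∧ M f)
    (hcomp : ∀ ⦃X Y Z : B⦄ (f : X ⟶ Y) (g : Y ⟶ Z), M f → M g → M (f ≫ g)) :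
    FactorizationsExist B (ordLlp B M) M := by
  intro X Y f
  obtain ⟨P, mP, π, ⟨hπ, huniv⟩, hmP⟩ :=
    hint (fun F : MorphismProperty.MapFactorizationData ⊤ M f => F.Z) (fun F => F.p)
      (fun F => F.hp)
  obtain ⟨e, ⟨he, heπ⟩, -⟩ := huniv f (fun F => F.i) (fun F => F.fac)
  refine ⟨P, e, mP, ordLlp_of_exists_section hmono hpb fun P' n k hn hk => ?_, hmP, he⟩
  let F : MorphismProperty.MapFactorizationData ⊤ M f :=
    { Z := P', i := k, p := n ≫ mP, fac := by rw [reassoc_of% hk, he], hi := trivial,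
      hp := hcomp n mP hn hmP }
  have := hmono mP hmP
  exact ⟨π F, by rw [← cancel_mono mP, Category.assoc, hπ F, Category.id_comp], heπ F⟩

end Factorization

lemma isIso_of_ordOrth_of_fac {X Y Z : B} {e : X ⟶ Z} {p : Z ⟶ Y} {m : X ⟶ Y} [Mono p]
    (hfac : e ≫ p = m) (h : OrdOrth B e m) : IsIso e := by
  obtain ⟨d, ⟨hed, hdm⟩, -⟩ := h (𝟙 X) p (by rw [Category.id_comp, hfac])
  exact ⟨d, hed, by rw [← cancel_mono p, Category.assoc, hfac, hdm, Category.id_comp]⟩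

lemma ClosedUnderCotensors.precomp_isIso {M : MorphismProperty B}
    (hcot : ClosedUnderCotensors V B M) {A X₁ X₂ : B} (i : A ⟶ X₁) [IsIso i] {m : X₁ ⟶ X₂}
    (hm : M m) : M (i ≫ m) :=
  hcot (𝟙_ V) m (eHomEquiv V i) (eId V X₂) (isCotensorCounit_eHomEquiv_of_isIso i)
    (isCotensorCounit_eId X₂) hm (i ≫ m) (by
      rw [← eHomEquiv_comp_eq_whiskerLeft, ← eHomEquiv_id, ← eHomEquiv_comp_eq_whiskerRight,
        Category.comp_id])

lemma vRlp_vLlp_eq {M : MorphismProperty B} (hmono : ∀ ⦃X Y : B⦄ (f : X ⟶ Y), M f → Mono f)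
    (hcot : ClosedUnderCotensors V B M) (hfac : FactorizationsExist B (vLlp V B M) M) :
    vRlp V B (vLlp V B M) = M := by
  ext X₁ X₂ m
  refine ⟨fun hm => ?_, fun hm _ _ e he => he m hm⟩
  obtain ⟨Z, e, p, he, hp, rfl⟩ := hfac m
  have := hmono p hp
  have := isIso_of_ordOrth_of_fac rfl (ordOrth_of_vOrth (hm e he))
  exact hcot.precomp_isIso e hp

end

/-- If `B` is cotensored and `M` is a class of monomorphisms satisfying the hypotheses
of CHK Lemma 3.1 and closed under cotensors, then `(M^{↑V}, M) = (M^↑, M)` is a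
`V`-factorization system on `B`. -/
theorem stmt13 (hc : Cotensored V B) (M : MorphismProperty B)
    (hmono : ∀ ⦃X Y : B⦄ (f : X ⟶ Y), M f → Mono f)
    (hint : ∀ {ι : Type (max u₂ v₂)} {C : B} (X : ι → B) (f : ∀ i, X i ⟶ C),
      (∀ i, M (f i)) → ∃ (P : B) (m : P ⟶ C) (π : ∀ i, P ⟶ X i),
        OrdIsFibreProduct B f m π ∧ M m)
    (hpb : ∀ ⦃X Z Q : B⦄ (m : X ⟶ Z) (g : Q ⟶ Z), M m →
      ∃ (P : B) (p : P ⟶ X) (f : P ⟶ Q), IsPullback p f m g ∧ M f)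
    (hcomp : ∀ ⦃X Y Z : B⦄ (f : X ⟶ Y) (g : Y ⟶ Z), M f → M g → M (f ≫ g))
    (hcot : ClosedUnderCotensors V B M) :
    vLlp V B M = ordLlp B M ∧ IsVFactorizationSystem V B (vLlp V B M) M := by
  have hE : vLlp V B M = ordLlp B M := vLlp_eq_ordLlp hc hcot
  have hfac : FactorizationsExist B (vLlp V B M) M :=
    hE ▸ factorizationsExist_ordLlp hmono hint hpb hcomp
  exact ⟨hE, ⟨vRlp_vLlp_eq hmono hcot hfac, rfl⟩, hfac⟩

end EnrichedFS
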